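/- Cones centered at the origin of the form {(x, y, t) : t = k·√(x² + y²)} for fixed k ≥ 0 are invariant under Q̂ in the following sense: if t = k√(x² + y²) with (x,y) ≠ (0,0), then writing Q̂(x, y, t) = (x', y', t'), the ratio t'/√(x'² + y'²) equals 2(t/√(x²+y²))·√(1 + t²/(x²+y²)), i.e. t'/√(x'²+y'²) = 2·t·‖p‖/(x² + y²), which depends only on k = t/√(x²+y²). -/

import Mathlib

/-- The Poincaré extension of the squaring map to the upper half-space. -/
noncomputable def QHat (p : ℝ × ℝ × ℝ) : ℝ × ℝ × ℝ :=
  ((p.1 ^ 2 + p.2.1 ^ 2 + p.2.2 ^ 2) * (p.1 ^ 2 - p.2.1 ^ 2) /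
      ((p.1 ^ 2 + p.2.1 ^ 2 + p.2.2 ^ 2) + p.2.2 ^ 2),
   (p.1 ^ 2 + p.2.1 ^ 2 + p.2.2 ^ 2) * (2 * p.1 * p.2.1) /
      ((p.1 ^ 2 + p.2.1 ^ 2 + p.2.2 ^ 2) + p.2.2 ^ 2),
   (p.1 ^ 2 + p.2.1 ^ 2 + p.2.2 ^ 2) *
      (2 * p.2.2 * Real.sqrt (p.1 ^ 2 + p.2.1 ^ 2 + p.2.2 ^ 2)) /
      ((p.1 ^ 2 + p.2.1 ^ 2 + p.2.2 ^ 2) + p.2.2 ^ 2))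

/-- Cones about the vertical axis are permuted by `QHat`: if
`t = k √(x² + y²)` then the image point `(x',y',t') = QHat (x,y,t)` satisfies
`t' / √(x'² + y'²) = 2 t ‖p‖ / (x² + y²) = 2 k √(1 + k²)`, a quantity
depending only on `k`. -/
theorem qHat_cones (x y t k : ℝ) (hxy : (x, y) ≠ (0, 0)) (hk : 0 ≤ k)
    (ht : t = k * Real.sqrt (x ^ 2 + y ^ 2)) :
    (QHat (x, y, t)).2.2 /
        Real.sqrt ((QHat (x, y, t)).1 ^ 2 + (QHat (x, y, t)).2.1 ^ 2) =
      2 * t * Real.sqrt (x ^ 2 + y ^ 2 + t ^ 2) / (x ^ 2 + y ^ 2) ∧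
    (QHat (x, y, t)).2.2 /
        Real.sqrt ((QHat (x, y, t)).1 ^ 2 + (QHat (x, y, t)).2.1 ^ 2) =
      2 * k * Real.sqrt (1 + k ^ 2) := by
  have hs : 0 < x ^ 2 + y ^ 2 := by
    rcases eq_or_ne x 0 with hx | hx
    · have hy : y ≠ 0 := fun hy => hxy (by simp [hx, hy])
      positivity
    · positivity
  set s : ℝ := x ^ 2 + y ^ 2 with hsdef
  have hN : 0 < x ^ 2 + y ^ 2 + t ^ 2 := by positivity
  set N : ℝ := x ^ 2 + y ^ 2 + t ^ 2 with hNdef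
  have hD : 0 < N + t ^ 2 := by positivity
  have hsqN : Real.sqrt N ^ 2 = N := Real.sq_sqrt hN.le
  have hden : Real.sqrt ((QHat (x, y, t)).1 ^ 2 + (QHat (x, y, t)).2.1 ^ 2)
      = N * s / (N + t ^ 2) := by
    have : (QHat (x, y, t)).1 ^ 2 + (QHat (x, y, t)).2.1 ^ 2
        = (N * s / (N + t ^ 2)) ^ 2 := by
      simp only [QHat, hNdef, hsdef]
      rw [div_pow, div_pow, div_pow, ← add_div]
      congr 1 <;> ring
    rw [this, Real.sqrt_sq (by positivity)]
  have h1 : (QHat (x, y, t)).2.2 /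
      Real.sqrt ((QHat (x, y, t)).1 ^ 2 + (QHat (x, y, t)).2.1 ^ 2)
      = 2 * t * Real.sqrt N / s := by
    rw [hden]
    show N * (2 * t * Real.sqrt N) / (N + t ^ 2) / (N * s / (N + t ^ 2)) = _
    field_simp
  refine ⟨h1, h1.trans ?_⟩
  have hss : Real.sqrt s ^ 2 = s := Real.sq_sqrt hs.le
  have ht2 : t ^ 2 = k ^ 2 * s := by rw [ht, mul_pow, hss]
  have hNeq : Real.sqrt N = Real.sqrt s * Real.sqrt (1 + k ^ 2) := by
    rw [hNdef, ← hsdef, ht2, ← Real.sqrt_mul hs.le]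
    ring_nf
  rw [hNeq, ht]
  have hspos : (0:ℝ) < Real.sqrt s := Real.sqrt_pos.mpr hs
  have key : Real.sqrt s * Real.sqrt s = s := Real.mul_self_sqrt hs.le
  rw [div_eq_iff hs.ne']
  linear_combination 2 * k * Real.sqrt (1 + k ^ 2) * key
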